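/- arXiv:1610.09795 — 2 statements merged into one kernel-verified Lean document; each statement's English description precedes it below -/
import Mathlib

section
/- Let D be a canonical DBM over n clocks. Then the delay (time-elapse) matrix D↑ is again canonical, i.e. D↑ satisfies the triangle inequality ∀ i j k, D↑ i j ≤ D↑ i k + D↑ k j. -/
/-! The delay only raises entries, so the triangle inequality `D↑ i j ≤ D↑ i k + D↑ k j` is
inherited from `D` except at the raised entries `(i, 0)`, `i ≠ 0`. There the right-hand side is
`⊤`: the step `i → k` is a raised entry if `k = 0`, and the step `k → 0` is one otherwise. -/

/-- A DBM over `n` clocks: index `0` is the reference clock. -/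
abbrev DBM (n : ℕ) := Fin (n + 1) → Fin (n + 1) → WithTop ℝ

/-- A DBM is canonical if it satisfies the triangle inequality. -/
def Canonical {n : ℕ} (D : DBM n) : Prop :=
  ∀ i j k, D i j ≤ D i k + D k j

/-- The delay (time-elapse) matrix `D↑`: entries `(i, 0)` for `i ≠ 0` become `⊤`,
all other entries are unchanged. -/
def delay {n : ℕ} (D : DBM n) : DBM n :=
  fun i j => if i ≠ 0 ∧ j = 0 then ⊤ else D i j

namespace Canonical

variable {n : ℕ} {D E : DBM n}

theorem of_le_of_eq_or_add_eq_top (hD : Canonical D) (hle : D ≤ E)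
    (hE : ∀ i j k, E i j = D i j ∨ E i k + E k j = ⊤) : Canonical E := by
  intro i j k
  rcases hE i j k with hij | hpath
  · calc E i j = D i j := hij
      _ ≤ D i k + D k j := hD i j k
      _ ≤ E i k + E k j := add_le_add (hle i k) (hle k j)
  · exact hpath ▸ le_top

end Canonical

section Delay

variable {n : ℕ} (D : DBM n)

theorem le_delay : D ≤ delay D := fun i j => by
  unfold delay
  split_ifs
  exacts [le_top, le_rfl]

theorem delay_apply_of_ne_zero_of_eq_zero {i j : Fin (n + 1)} (hi : i ≠ 0) (hj : j = 0) :
    delay D i j = ⊤ := if_pos ⟨hi, hj⟩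

theorem delay_apply_of_not {i j : Fin (n + 1)} (h : ¬(i ≠ 0 ∧ j = 0)) : delay D i j = D i j :=
  if_neg h

theorem delay_add_delay_zero {i : Fin (n + 1)} (hi : i ≠ 0) (k : Fin (n + 1)) :
    delay D i k + delay D k 0 = ⊤ := by
  by_cases hk : k = 0
  · rw [delay_apply_of_ne_zero_of_eq_zero D hi hk, top_add]
  · rw [delay_apply_of_ne_zero_of_eq_zero D hk rfl, add_top]

end Delay

/-- if `D` is canonical, then the delay matrix `D↑` is again canonical. -/
theorem delay_preserves_canonical {n : ℕ} (D : DBM n) (hD : Canonical D) :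
    Canonical (delay D) := by
  refine hD.of_le_of_eq_or_add_eq_top (le_delay D) fun i j k => ?_
  by_cases h : i ≠ 0 ∧ j = 0
  · obtain ⟨hi, rfl⟩ := h
    exact Or.inr (delay_add_delay_zero D hi k)
  · exact Or.inl (delay_apply_of_not D h)
end

section
/- Let D be a canonical DBM over n clocks, let D' be any DBM with D i j ≤ D' i j for all i, j (for instance a partial extrapolation of D), and suppose that for fixed indices a, b the entry is untouched: D' a b = D a b. Then re-canonicalizing D' leaves that entry unchanged: Canon(D') a b = D a b. -/
/-- Weight of the path `p 0, p 1, …, p m` in `D`, computed in `WithTop ℝ`. -/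
def pathWeight {n : ℕ} (D : DBM n) (p : ℕ → Fin (n + 1)) (m : ℕ) : WithTop ℝ :=
  ∑ k ∈ Finset.range m, D (p k) (p (k + 1))

/-- Canonicalization: `Canon D i j` is the minimum weight over all paths from `i` to `j`
with at most `n + 1` edges (the minimum of a finite nonempty set in `WithTop ℝ`). -/
noncomputable def Canon {n : ℕ} (D : DBM n) : DBM n := fun i j =>
  sInf {w | ∃ m p, 1 ≤ m ∧ m ≤ n + 1 ∧ p 0 = i ∧ p m = j ∧ w = pathWeight D p m}

section

variable {n : ℕ}

def pathWeights (D : DBM n) (i j : Fin (n + 1)) : Set (WithTop ℝ) :=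
  {w | ∃ m p, 1 ≤ m ∧ m ≤ n + 1 ∧ p 0 = i ∧ p m = j ∧ w = pathWeight D p m}

theorem canon_eq_sInf_pathWeights (D : DBM n) (i j : Fin (n + 1)) :
    Canon D i j = sInf (pathWeights D i j) :=
  rfl

theorem pathWeight_succ (D : DBM n) (p : ℕ → Fin (n + 1)) (m : ℕ) :
    pathWeight D p (m + 1) = pathWeight D p m + D (p m) (p (m + 1)) :=
  Finset.sum_range_succ _ _

theorem pathWeight_mono {D D' : DBM n} (hle : ∀ i j, D i j ≤ D' i j)
    (p : ℕ → Fin (n + 1)) (m : ℕ) : pathWeight D p m ≤ pathWeight D' p m :=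
  Finset.sum_le_sum fun _ _ => hle _ _

theorem apply_mem_pathWeights (D : DBM n) (i j : Fin (n + 1)) : D i j ∈ pathWeights D i j :=
  ⟨1, fun k => if k = 0 then i else j, le_rfl, by omega, rfl, rfl, by simp [pathWeight]⟩

theorem Canonical.apply_le_pathWeight {D : DBM n} (hD : Canonical D) (p : ℕ → Fin (n + 1))
    {m : ℕ} (hm : 1 ≤ m) : D (p 0) (p m) ≤ pathWeight D p m := by
  induction m, hm using Nat.le_induction with
  | base => simp [pathWeight]
  | succ m _ ih =>
    calc D (p 0) (p (m + 1)) ≤ D (p 0) (p m) + D (p m) (p (m + 1)) := hD _ _ _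
      _ ≤ pathWeight D p m + D (p m) (p (m + 1)) := add_le_add_left ih _
      _ = pathWeight D p (m + 1) := (pathWeight_succ D p m).symm

theorem Canonical.apply_le_of_mem_pathWeights {D D' : DBM n} (hD : Canonical D)
    (hle : ∀ i j, D i j ≤ D' i j) {i j : Fin (n + 1)} {w : WithTop ℝ}
    (hw : w ∈ pathWeights D' i j) : D i j ≤ w := by
  obtain ⟨m, p, hm, -, rfl, rfl, rfl⟩ := hw
  exact (hD.apply_le_pathWeight p hm).trans (pathWeight_mono hle p m)

end

/-- if `D` is canonical, `D'` dominates `D` entrywise, and the entry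
`(a, b)` is untouched (`D' a b = D a b`), then re-canonicalizing `D'` leaves that entry
unchanged: `Canon D' a b = D a b`. -/
theorem canon_untouched_entry {n : ℕ} (D D' : DBM n) (hD : Canonical D)
    (hle : ∀ i j, D i j ≤ D' i j) (a b : Fin (n + 1)) (hab : D' a b = D a b) :
    Canon D' a b = D a b := by
  rw [canon_eq_sInf_pathWeights]
  refine IsLeast.csInf_eq ⟨?_, fun w hw => hD.apply_le_of_mem_pathWeights hle hw⟩
  exact hab ▸ apply_mem_pathWeights D' a b
end
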